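/- arXiv:1809.06806 — 2 statements merged into one kernel-verified Lean document; each statement's English description precedes it below -/
import Mathlib

section
/- Let A be an (N-1)×(N-1) real matrix with A_{ii} = λ(i), A_{ij} = ν(j,i) ≥ 0 for (j,i) ∈ E, and 0 otherwise, where the root vertex 1 has no incoming edges. Suppose that for all 2 ≤ i ≤ N-1, λ(i) + Σ_{k : (k,i) ∈ E} ν(k,i) < λ(1). Then λ(1) is an eigenvalue of A (with left eigenvector e_1^T), and every other eigenvalue of A has real part strictly less than λ(1); in particular λ(1) is a simple eigenvalue. -/
/-!
The root row of `A` is `λ(1) e₁ᵀ`, so expanding `det (X - A)` along it gives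
`χ_A = (X - λ(1)) χ_{A'}`, where `A'` is the principal submatrix on the non-root vertices.
By Gershgorin, every eigenvalue of `A'` lies in a disc centred at some `λ(i)`, `i ≠ 1`, of radius
at most `Σ_k ν(k,i)`, hence has real part `< λ(1)`. Therefore `λ(1)` is a simple root of `χ_A`,
and every other eigenvalue of `A` is an eigenvalue of `A'`.
-/

open Polynomial Matrix Finset

namespace Matrix

section RowZero

lemma charmatrix_submatrix {R ι κ : Type*} [CommRing R] [Fintype ι] [DecidableEq ι] [Fintype κ]
    [DecidableEq κ] {e : κ → ι} (he : Function.Injective e) (N : Matrix ι ι R) :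
    (charmatrix N).submatrix e e = charmatrix (N.submatrix e e) := by
  ext i j
  by_cases h : i = j
  · simp [h, charmatrix_apply_eq]
  · simp [charmatrix_apply_ne _ _ _ h, charmatrix_apply_ne _ _ _ (he.ne h)]

lemma charpoly_eq_X_sub_C_mul_of_row_zero {R : Type*} [CommRing R] {m : ℕ}
    (M : Matrix (Fin (m + 1)) (Fin (m + 1)) R) (hrow : ∀ j, j ≠ 0 → M 0 j = 0) :
    M.charpoly = (X - C (M 0 0)) * (M.submatrix Fin.succ Fin.succ).charpoly := by
  rw [charpoly, det_succ_row_zero, Finset.sum_eq_single 0]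
  · simp [charmatrix_apply_eq, charpoly, charmatrix_submatrix (Fin.succ_injective m)]
  · intro j _ hj
    simp [charmatrix_apply_ne _ _ _ (Ne.symm hj), hrow j hj]
  · simp

variable {K : Type*} [Field K] {m : ℕ} {M : Matrix (Fin (m + 1)) (Fin (m + 1)) K}

lemma mem_spectrum_iff_of_row_zero (hrow : ∀ j, j ≠ 0 → M 0 j = 0) {μ : K} :
    μ ∈ spectrum K M ↔ μ = M 0 0 ∨ μ ∈ spectrum K (M.submatrix Fin.succ Fin.succ) := by
  simp [mem_spectrum_iff_isRoot_charpoly, charpoly_eq_X_sub_C_mul_of_row_zero M hrow,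
    sub_eq_zero]

lemma rootMultiplicity_charpoly_of_row_zero (hrow : ∀ j, j ≠ 0 → M 0 j = 0)
    (hsub : M 0 0 ∉ spectrum K (M.submatrix Fin.succ Fin.succ)) :
    M.charpoly.rootMultiplicity (M 0 0) = 1 := by
  rw [mem_spectrum_iff_isRoot_charpoly] at hsub
  rw [charpoly_eq_X_sub_C_mul_of_row_zero M hrow,
    rootMultiplicity_mul (mul_ne_zero (X_sub_C_ne_zero _) (charpoly_monic _).ne_zero),
    rootMultiplicity_X_sub_C_self, rootMultiplicity_eq_zero hsub]

end RowZero

lemma re_lt_of_mem_spectrum_map_ofReal {ι : Type*} [Fintype ι] [DecidableEq ι]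
    {M : Matrix ι ι ℝ} {r : ℝ} (hM : ∀ k, M k k + ∑ j ∈ univ.erase k, |M k j| < r)
    {μ : ℂ} (hμ : μ ∈ spectrum ℂ (M.map Complex.ofReal)) : μ.re < r := by
  rw [← spectrum_toLin', ← Module.End.hasEigenvalue_iff_mem_spectrum] at hμ
  obtain ⟨k, hk⟩ := eigenvalue_mem_ball hμ
  rw [Metric.mem_closedBall, dist_eq_norm] at hk
  calc μ.re = (μ - M k k).re + M k k := by simp
    _ ≤ ‖μ - M k k‖ + M k k := by gcongr; exact Complex.re_le_norm _
    _ ≤ ∑ j ∈ univ.erase k, |M k j| + M k k := by simpa using hk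
    _ < r := by linarith [hM k]

lemma sum_erase_abs_submatrix_le {ι κ : Type*} [Fintype ι] [DecidableEq ι] [Fintype κ]
    [DecidableEq κ] {e : κ → ι} (he : Function.Injective e) (M : Matrix ι ι ℝ) (k : κ) :
    ∑ j ∈ univ.erase k, |M.submatrix e e k j| ≤ ∑ j ∈ univ.erase (e k), |M (e k) j| := by
  simp only [submatrix_apply]
  rw [← sum_image (f := fun j => |M (e k) j|) he.injOn]
  refine sum_le_sum_of_subset_of_nonneg ?_ fun _ _ _ => abs_nonneg _
  intro j hj
  obtain ⟨j', hj', rfl⟩ := mem_image.mp hj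
  exact mem_erase.mpr ⟨he.ne (ne_of_mem_erase hj'), mem_univ _⟩

end Matrix

section GrowthMatrix

variable {ι : Type*} [DecidableEq ι] (E : ι → ι → Prop) [DecidableRel E]
  (lam : ι → ℝ) (ν : ι → ι → ℝ)

def growthMatrix : Matrix ι ι ℝ :=
  fun i j => if i = j then lam i else if E j i then ν j i else 0

variable {E lam ν}

@[simp]
lemma growthMatrix_apply_self (i : ι) : growthMatrix E lam ν i i = lam i := by
  simp [growthMatrix]

lemma growthMatrix_apply_of_ne {i j : ι} (h : i ≠ j) :
    growthMatrix E lam ν i j = if E j i then ν j i else 0 := by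
  simp [growthMatrix, h]

lemma growthMatrix_apply_eq_zero_of_not_adj {i j : ι} (h : i ≠ j) (hE : ¬E j i) :
    growthMatrix E lam ν i j = 0 := by
  simp [growthMatrix_apply_of_ne h, hE]

lemma growthMatrix_row_of_forall_not_adj {r : ι} (hr : ∀ k, ¬E k r) :
    (growthMatrix E lam ν).row r = Pi.single r (lam r) := by
  ext j
  by_cases h : r = j
  · subst h; simp
  · simp [growthMatrix_apply_eq_zero_of_not_adj h (hr j), Ne.symm h]

lemma sum_erase_abs_growthMatrix_le [Fintype ι] (hν : ∀ i j, E i j → 0 ≤ ν i j) (i : ι) :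
    ∑ j ∈ univ.erase i, |growthMatrix E lam ν i j| ≤ ∑ k, if E k i then ν k i else 0 := by
  have hnonneg : ∀ k, 0 ≤ if E k i then ν k i else 0 := fun k => by
    split_ifs with hE
    exacts [hν k i hE, le_rfl]
  calc ∑ j ∈ univ.erase i, |growthMatrix E lam ν i j|
      = ∑ j ∈ univ.erase i, if E j i then ν j i else 0 := by
        refine sum_congr rfl fun j hj => ?_
        rw [growthMatrix_apply_of_ne (ne_of_mem_erase hj).symm, abs_of_nonneg (hnonneg j)]
    _ ≤ ∑ k, if E k i then ν k i else 0 :=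
        sum_le_sum_of_subset_of_nonneg (subset_univ _) fun k _ _ => hnonneg k

lemma diag_add_sum_erase_abs_submatrix_growthMatrix_le [Fintype ι] {κ : Type*} [Fintype κ]
    [DecidableEq κ] {e : κ → ι} (he : Function.Injective e) (hν : ∀ i j, E i j → 0 ≤ ν i j)
    (k : κ) :
    (growthMatrix E lam ν).submatrix e e k k +
        ∑ j ∈ univ.erase k, |(growthMatrix E lam ν).submatrix e e k j| ≤
      lam (e k) + ∑ i, if E i (e k) then ν i (e k) else 0 := by
  rw [submatrix_apply, growthMatrix_apply_self]
  gcongr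
  exact (sum_erase_abs_submatrix_le he _ k).trans (sum_erase_abs_growthMatrix_le hν _)

end GrowthMatrix

/-- Let `A` be the mean-growth matrix of the process on a graph whose root
(vertex `0`) has no incoming edges, with `A_{ii} = lam i`, `A_{ij} = ν j i ≥ 0` for edges
`(j,i)`, and `0` otherwise. If `lam i + Σ_{k : (k,i) ∈ E} ν k i < lam 0` for all `i ≠ 0`,
then `lam 0` is an eigenvalue of `A` with left eigenvector `e₀ᵀ`, every other (complex)
eigenvalue has real part strictly less than `lam 0`, and `lam 0` is a simple eigenvalue. -/
theorem stmt13 (n : ℕ) (hn : 0 < n) (E : Fin n → Fin n → Prop) [DecidableRel E]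
    (lam : Fin n → ℝ) (ν : Fin n → Fin n → ℝ)
    (hν : ∀ i j, E i j → 0 ≤ ν i j)
    (hroot : ∀ k, ¬ E k ⟨0, hn⟩)
    (hrow : ∀ i : Fin n, i ≠ ⟨0, hn⟩ →
      lam i + ∑ k, (if E k i then ν k i else 0) < lam ⟨0, hn⟩) :
    let A : Matrix (Fin n) (Fin n) ℝ :=
      fun i j => if i = j then lam i else if E j i then ν j i else 0
    let B : Matrix (Fin n) (Fin n) ℂ := A.map Complex.ofReal
    (Matrix.vecMul (Pi.single ⟨0, hn⟩ 1 : Fin n → ℝ) A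
      = lam ⟨0, hn⟩ • (Pi.single ⟨0, hn⟩ 1 : Fin n → ℝ)) ∧
    ((lam ⟨0, hn⟩ : ℂ) ∈ spectrum ℂ B) ∧
    (∀ μ ∈ spectrum ℂ B, μ ≠ (lam ⟨0, hn⟩ : ℂ) → μ.re < lam ⟨0, hn⟩) ∧
    Polynomial.rootMultiplicity ((lam ⟨0, hn⟩ : ℂ)) B.charpoly = 1 := by
  obtain ⟨m, rfl⟩ : ∃ m, n = m + 1 := ⟨n - 1, by omega⟩
  rw [show (⟨0, hn⟩ : Fin (m + 1)) = 0 from rfl] at hroot hrow ⊢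
  intro A B
  have hA : A = growthMatrix E lam ν := rfl
  clear_value A
  subst hA
  have hB00 : B 0 0 = lam 0 := by simp [B]
  have hBrow : ∀ j, j ≠ 0 → B 0 j = 0 := fun j hj => by
    simp [B, growthMatrix_apply_eq_zero_of_not_adj hj.symm (hroot j)]
  have hsub : ∀ μ ∈ spectrum ℂ (B.submatrix Fin.succ Fin.succ), μ.re < lam 0 :=
    fun _ => re_lt_of_mem_spectrum_map_ofReal fun k =>
      (diag_add_sum_erase_abs_submatrix_growthMatrix_le (Fin.succ_injective m) hν k).trans_lt
        (hrow _ k.succ_ne_zero)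
  rw [← hB00]
  refine ⟨?_, (mem_spectrum_iff_of_row_zero hBrow).mpr (Or.inl rfl), fun μ hμ hne => ?_,
    rootMultiplicity_charpoly_of_row_zero hBrow fun h => by simpa [hB00] using hsub _ h⟩
  · rw [single_one_vecMul, growthMatrix_row_of_forall_not_adj hroot, ← Pi.single_smul,
      smul_eq_mul, mul_one]
  · rcases (mem_spectrum_iff_of_row_zero hBrow).mp hμ with h | h
    exacts [absurd h hne, hsub μ h]
end

section
/- Let p be a root-to-target path in a directed graph G and ω a root-to-target walk with q[ω] = p and ω ≠ p, where q reduces a walk to its underlying path by deleting cycles. Then the walk weight factorizes as w(ω) = w(p) · w̃(ω), where w̃(ω) is the product of transition rates over the edges of ω lying in its cycles divided by the product of fitness costs λ - λ(v) over the internal vertices of those cycles; consequently w(p)/(w(p) + w(ω)) = 1/(1 + w̃(ω)) → 1 as all transition rates tend to 0 (with the fitness costs fixed and positive). -/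
/-!
Removing the cycles of `ω` removes a sub-multiset of its edges and of its internal vertices,
so `w(ω) / w(p)` is the product over exactly those removed pieces. Scaling every rate by `ε`
multiplies the weight of a walk with `n` edges by `εⁿ`; since `ω` has more edges than `p`,
the ratio `w(p) / (w(p) + w(ω))` becomes `P / (P + εᵏ W)` with `k > 0`, which tends to `1`.
-/

open Filter

/-- The multiset of (directed) edges traversed by a walk, given as its list of vertices. -/
def walkEdges {V : Type*} (l : List V) : Multiset (V × V) := ↑(l.zip l.tail)

/-- The multiset of internal vertices of a walk (all vertices except the first and last). -/
def walkInternals {V : Type*} (l : List V) : Multiset V := ↑(l.tail.dropLast)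

/-- The weight of a walk: the product of the transition rates `ν` along its edges divided by
the product of the fitness costs `L - lam v` over its internal vertices, `L` being the root
growth rate. -/
noncomputable def walkWeight {V : Type*} (L : ℝ) (lam : V → ℝ) (ν : V → V → ℝ) (l : List V) : ℝ :=
  ((walkEdges l).map fun e => ν e.1 e.2).prod /
    ((walkInternals l).map fun v => L - lam v).prod

open Topology

section WalkWeight

variable {V : Type*} (L : ℝ) (lam : V → ℝ) (ν : V → V → ℝ)

lemma card_walkEdges (l : List V) : Multiset.card (walkEdges l) = l.length - 1 := by
  simp [walkEdges, List.length_zip]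

lemma walkWeight_pos {l : List V} (hrate : ∀ e ∈ walkEdges l, 0 < ν e.1 e.2)
    (hcost : ∀ v ∈ walkInternals l, 0 < L - lam v) : 0 < walkWeight L lam ν l :=
  div_pos (Multiset.prod_pos <| Multiset.forall_mem_map_iff.mpr hrate)
    (Multiset.prod_pos <| Multiset.forall_mem_map_iff.mpr hcost)

lemma walkWeight_eq_mul_of_le [DecidableEq V] {p ω : List V}
    (hedges : walkEdges p ≤ walkEdges ω) (hints : walkInternals p ≤ walkInternals ω) :
    walkWeight L lam ν ω = walkWeight L lam ν p *
      (((walkEdges ω - walkEdges p).map fun e => ν e.1 e.2).prod /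
        ((walkInternals ω - walkInternals p).map fun v => L - lam v).prod) := by
  unfold walkWeight
  conv_lhs => rw [← tsub_add_cancel_of_le hedges, ← tsub_add_cancel_of_le hints]
  rw [Multiset.map_add, Multiset.map_add, Multiset.prod_add, Multiset.prod_add,
    mul_div_mul_comm, mul_comm]

lemma walkWeight_const_mul (ε : ℝ) (l : List V) :
    walkWeight L lam (fun a b => ε * ν a b) l = ε ^ (l.length - 1) * walkWeight L lam ν l := by
  rw [walkWeight, walkWeight, Multiset.prod_map_mul, Multiset.map_const',
    Multiset.prod_replicate, card_walkEdges, mul_div_assoc]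

end WalkWeight

lemma tendsto_pow_mul_div_pow_mul_add_pow_mul {P : ℝ} (hP : P ≠ 0) (W : ℝ) {m n : ℕ}
    (hmn : m < n) :
    Tendsto (fun ε : ℝ => ε ^ m * P / (ε ^ m * P + ε ^ n * W)) (𝓝[>] 0) (𝓝 1) := by
  obtain ⟨k, hk, rfl⟩ : ∃ k ≠ 0, n = m + k := ⟨n - m, by omega, by omega⟩
  have hden : Tendsto (fun ε : ℝ => P + ε ^ k * W) (𝓝 0) (𝓝 P) := by
    simpa [zero_pow hk] using (((continuous_pow k).tendsto 0).mul_const W).const_add P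
  have hlim : Tendsto (fun ε : ℝ => P / (P + ε ^ k * W)) (𝓝 0) (𝓝 1) := by
    rw [← div_self hP]
    exact tendsto_const_nhds.div hden hP
  refine (hlim.mono_left nhdsWithin_le_nhds).congr' ?_
  filter_upwards [self_mem_nhdsWithin] with ε (hε : 0 < ε)
  rw [pow_add, mul_assoc, ← mul_add, mul_div_mul_left _ _ (pow_ne_zero m hε.ne')]

/-- Let `p` be a root-to-target path and `ω ≠ p` a root-to-target walk reducing
to `p` by deleting cycles (so the edges and internal vertices of `p` are among those of `ω`,
and `ω` is strictly longer).  Then the walk weight factorizes as `w(ω) = w(p) · w̃(ω)` where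
`w̃(ω)` is the product of the transition rates over the cycle edges divided by the fitness
costs over the cycle's internal vertices; consequently, scaling all transition rates by
`ε → 0⁺` (fitness costs fixed and positive), `w(p)/(w(p) + w(ω)) → 1`. -/
theorem stmt18 {V : Type*} [DecidableEq V] (L : ℝ) (lam : V → ℝ) (ν : V → V → ℝ)
    (p ω : List V)
    (hp2 : 2 ≤ p.length)
    (hedges : walkEdges p ≤ walkEdges ω)
    (hints : walkInternals p ≤ walkInternals ω)
    (hlen : p.length < ω.length)
    (hcost : ∀ v ∈ walkInternals ω, 0 < L - lam v)
    (hrate : ∀ e ∈ walkEdges ω, 0 < ν e.1 e.2) :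
    walkWeight L lam ν ω = walkWeight L lam ν p *
      (((walkEdges ω - walkEdges p).map fun e => ν e.1 e.2).prod /
        ((walkInternals ω - walkInternals p).map fun v => L - lam v).prod) ∧
    Tendsto (fun ε : ℝ =>
        walkWeight L lam (fun a b => ε * ν a b) p /
          (walkWeight L lam (fun a b => ε * ν a b) p +
            walkWeight L lam (fun a b => ε * ν a b) ω))
      (nhdsWithin 0 (Set.Ioi 0)) (nhds 1) := by
  refine ⟨walkWeight_eq_mul_of_le L lam ν hedges hints, ?_⟩
  have hp : 0 < walkWeight L lam ν p :=
    walkWeight_pos L lam ν (fun e he => hrate e (Multiset.mem_of_le hedges he))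
      (fun v hv => hcost v (Multiset.mem_of_le hints hv))
  simp only [walkWeight_const_mul]
  exact tendsto_pow_mul_div_pow_mul_add_pow_mul hp.ne' _ (by omega)
end
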